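/- arXiv:1601.03512 — 4 statements merged into one kernel-verified Lean document; each statement's English description precedes it below -/
import Mathlib

section
/- Let M(t) be the associated function of a weight sequence M_p satisfying (M.1) and (M.2), and let g : [a,∞) → [0,∞). If g(t) = O(e^{M(kt)}) as t → ∞ for every k > 0, then there exists a non-decreasing sequence (r_j) of positive reals tending to infinity such that g(t) = O(e^{M_{r_j}(t)}), where M_{r_j} denotes the associated function of the sequence p ↦ M_p · ∏_{j=0}^{p} r_j. -/
open Real Filter

/-- The associated function `M(t) = sup_{p ∈ ℕ} log (t^p / M_p)`. -/
noncomputable def Massoc (M : ℕ → ℝ) (t : ℝ) : ℝ :=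
  ⨆ p : ℕ, Real.log (t ^ p / M p)

/-!
By (M.1) the quotients `m_q = M_{q+1} / M_q` are non-decreasing, so `s ^ p / M_p` is maximal at
the first `p` with `s < m_p`.

If the `m_q` are bounded, the supremum defining `M(t)` is infinite for large `t`, so `Massoc M t`
takes the junk value `0`; then `g` is eventually bounded, and any `r` works because
`Massoc L t ≥ min 0 (-log L_0)` always.

Otherwise, for `t ∈ [T_n, T_{n+1})` use the hypothesis with `k = (n+2)^{-2}` and put
`s = t / (n+2)^2`. If `r_j ≤ n + 2` for all `j` up to the maximizing index `p` of `s`, the `p`-th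
term of the weighted associated function at `t` exceeds `log (s ^ p / M_p)` by `(p - 1) log (n+2)`,
which swallows the constant `log C_n` as soon as `p` is large, i.e. as soon as `T_n` is large.
The sequence `r` is then chosen to grow so slowly that `r_j ≤ n + 2` up to the maximizing index of
`T_{n+1} / (n+2)^2`.
-/

open Set

theorem min_zero_neg_log_le_Massoc (L : ℕ → ℝ) (t : ℝ) :
    min 0 (-Real.log (L 0)) ≤ Massoc L t := by
  by_cases hbdd : BddAbove (range fun p => Real.log (t ^ p / L p))
  · calc min 0 (-Real.log (L 0)) ≤ Real.log (t ^ 0 / L 0) := by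
          simp [Real.log_inv]
      _ ≤ Massoc L t := le_ciSup hbdd 0
  · simp [Massoc, Real.iSup_of_not_bddAbove hbdd]

theorem exists_monotone_tendsto_atTop_forall_le (P : ℕ → ℕ) :
    ∃ r : ℕ → ℕ, Monotone r ∧ Tendsto r atTop atTop ∧ ∀ n j, j ≤ P n → r j ≤ n := by
  set S : ℕ → ℕ := fun n => n + ∑ i ∈ Finset.range (n + 1), P i
  have hS_mono : Monotone S := fun m n hmn =>
    add_le_add hmn (Finset.sum_le_sum_of_subset (Finset.range_subset_range.2 (by omega)))
  have hP_le_S : ∀ n, P n ≤ S n := fun n =>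
    (Finset.single_le_sum (fun i _ => Nat.zero_le (P i)) (Finset.self_mem_range_succ n)).trans
      (Nat.le_add_left _ _)
  have hex : ∀ j, ∃ n, j ≤ S n := fun j => ⟨j, Nat.le_add_right _ _⟩
  refine ⟨fun j => Nat.find (hex j), fun i j hij => Nat.find_mono fun n h => hij.trans h, ?_,
    fun n j hj => Nat.find_min' _ (hj.trans (hP_le_S n))⟩
  refine tendsto_atTop_atTop.2 fun N => ⟨S N + 1, fun j hj => ?_⟩
  exact (Nat.le_find_iff _ _).2 fun n hn hjn => by
    have := hS_mono hn.le
    omega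

theorem exists_le_lt_succ {T : ℕ → ℝ} (hT : ∀ x, ∃ n, x < T n) {t : ℝ} (ht : T 0 ≤ t) :
    ∃ n, T n ≤ t ∧ t < T (n + 1) := by
  have hN : Nat.find (hT t) ≠ 0 := fun h => (Nat.find_spec (hT t)).not_ge (h ▸ ht)
  refine ⟨Nat.find (hT t) - 1, not_lt.1 (Nat.find_min (hT t) (by omega)), ?_⟩
  rw [Nat.sub_add_cancel (Nat.one_le_iff_ne_zero.2 hN)]
  exact Nat.find_spec (hT t)

/-- `m_{q+1}` in the usual notation `m_p = M_p / M_{p-1}`. -/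
noncomputable def succRatio (M : ℕ → ℝ) (q : ℕ) : ℝ := M (q + 1) / M q

/-- The index `p` at which `s ^ p / M p` is maximal: the first `q` with `s < M_{q+1} / M_q`
(junk value `0` when there is none). -/
noncomputable def peakIndex (M : ℕ → ℝ) (s : ℝ) : ℕ := sInf {q | s < succRatio M q}

section WeightSequence

variable {M : ℕ → ℝ} (hpos : ∀ p, 0 < M p)
include hpos

theorem succRatio_pos (q : ℕ) : 0 < succRatio M q := div_pos (hpos _) (hpos _)

theorem succRatio_monotone (hM1 : ∀ p : ℕ, 1 ≤ p → M p ^ 2 ≤ M (p - 1) * M (p + 1)) :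
    Monotone (succRatio M) := by
  refine monotone_nat_of_le_succ fun q => ?_
  have h := hM1 (q + 1) (Nat.le_add_left 1 q)
  rw [Nat.add_sub_cancel] at h
  rw [succRatio, succRatio, div_le_div_iff₀ (hpos q) (hpos (q + 1))]
  nlinarith

theorem log_pow_succ_div {s : ℝ} (hs : 0 < s) (q : ℕ) :
    Real.log (s ^ (q + 1) / M (q + 1)) =
      Real.log (s ^ q / M q) + Real.log (s / succRatio M q) := by
  have := hpos q
  have := hpos (q + 1)
  rw [← Real.log_mul (by positivity) (div_pos hs (succRatio_pos hpos q)).ne', succRatio]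
  congr 1
  field_simp
  ring

theorem Massoc_eq_zero_of_succRatio_le {b t : ℝ} (hb : ∀ q, succRatio M q ≤ b)
    (ht : 2 * b ≤ t) : Massoc M t = 0 := by
  have ht0 : 0 < t := by linarith [succRatio_pos hpos 0, hb 0]
  have hgrow : ∀ q : ℕ, Real.log (t ^ 0 / M 0) + q * Real.log 2 ≤ Real.log (t ^ q / M q) := by
    intro q
    induction q with
    | zero => simp
    | succ q ih =>
      have h2 : Real.log 2 ≤ Real.log (t / succRatio M q) :=
        Real.log_le_log two_pos <| (le_div_iff₀ (succRatio_pos hpos q)).2 (by linarith [hb q])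
      rw [log_pow_succ_div hpos ht0]
      push_cast
      linarith
  refine Real.iSup_of_not_bddAbove (not_bddAbove_of_tendsto_atTop (l := atTop) ?_)
  exact tendsto_atTop_mono hgrow <| tendsto_atTop_add_const_left _ _ <|
    tendsto_natCast_atTop_atTop.atTop_mul_const (Real.log_pos one_lt_two)

end WeightSequence

section PeakIndex

variable {M : ℕ → ℝ} {s s' : ℝ}

theorem lt_succRatio_peakIndex (hs : ∃ q, s < succRatio M q) :
    s < succRatio M (peakIndex M s) :=
  Nat.sInf_mem hs

theorem succRatio_le_of_lt_peakIndex {j : ℕ} (hj : j < peakIndex M s) : succRatio M j ≤ s :=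
  not_lt.1 (Nat.notMem_of_lt_sInf hj)

theorem peakIndex_mono (hs' : ∃ q, s' < succRatio M q) (h : s ≤ s') :
    peakIndex M s ≤ peakIndex M s' :=
  le_csInf hs' fun _ hq => Nat.sInf_le (h.trans_lt hq)

theorem lt_peakIndex (hmono : Monotone (succRatio M)) (hs : ∃ q, s < succRatio M q) {Q : ℕ}
    (hQ : succRatio M Q ≤ s) : Q < peakIndex M s := by
  by_contra! h
  exact (lt_succRatio_peakIndex hs).not_ge ((hmono h).trans hQ)

theorem log_pow_div_le_peakIndex (hpos : ∀ p, 0 < M p) (hmono : Monotone (succRatio M))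
    (hs : ∃ q, s < succRatio M q) (hs0 : 0 < s) (q : ℕ) :
    Real.log (s ^ q / M q) ≤ Real.log (s ^ peakIndex M s / M (peakIndex M s)) := by
  set f : ℕ → ℝ := fun q => Real.log (s ^ q / M q)
  set p := peakIndex M s
  rcases le_total q p with hqp | hpq
  · refine monotoneOn_of_le_add_one (f := f) ordConnected_Iic
      (fun j _ _ hj => ?_) hqp self_mem_Iic hqp
    have hjp : j < p := Nat.lt_of_succ_le hj
    simp only [f, log_pow_succ_div hpos hs0, le_add_iff_nonneg_right]
    exact Real.log_nonneg <|
      (one_le_div (succRatio_pos hpos j)).2 (succRatio_le_of_lt_peakIndex hjp)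
  · refine antitoneOn_of_add_one_le (f := f) ordConnected_Ici
      (fun j _ hj _ => ?_) self_mem_Ici hpq hpq
    simp only [f, log_pow_succ_div hpos hs0, add_le_iff_nonpos_right]
    exact Real.log_nonpos (div_pos hs0 (succRatio_pos hpos j)).le <|
      (div_le_one (succRatio_pos hpos j)).2 ((lt_succRatio_peakIndex hs).le.trans (hmono hj))

end PeakIndex

section Weighted

variable {M : ℕ → ℝ} (hpos : ∀ p, 0 < M p)
include hpos

theorem Massoc_le_log_peakIndex (hmono : Monotone (succRatio M)) {s : ℝ}
    (hs : ∃ q, s < succRatio M q) (hs0 : 0 < s) :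
    Massoc M s ≤ Real.log (s ^ peakIndex M s / M (peakIndex M s)) :=
  ciSup_le (log_pow_div_le_peakIndex hpos hmono hs hs0)

theorem log_pow_div_le_Massoc_weighted (hmono : Monotone (succRatio M)) {r : ℕ → ℝ}
    (hr : ∀ j, 1 ≤ r j) {t : ℝ} (ht : ∃ q, t < succRatio M q) (ht0 : 0 < t) (p : ℕ) :
    Real.log (t ^ p / (M p * ∏ j ∈ Finset.range (p + 1), r j)) ≤
      Massoc (fun p => M p * ∏ j ∈ Finset.range (p + 1), r j) t := by
  refine le_ciSup
    (f := fun q => Real.log (t ^ q / (M q * ∏ j ∈ Finset.range (q + 1), r j))) ?_ p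
  refine BddAbove.range_mono _ (fun q => ?_)
    ⟨_, forall_mem_range.2 (log_pow_div_le_peakIndex hpos hmono ht ht0)⟩
  have hprod : 1 ≤ ∏ j ∈ Finset.range (q + 1), r j := Finset.one_le_prod fun j _ => hr j
  have := hpos q
  refine Real.log_le_log (by positivity) ?_
  exact div_le_div_of_nonneg_left (by positivity) this (le_mul_of_one_le_right this.le hprod)

theorem log_pow_div_add_le_log_weighted {r : ℕ → ℝ} (hr : ∀ j, 0 < r j) {ρ s : ℝ} (hs : 0 < s)
    {p : ℕ} (hrρ : ∀ j ≤ p, r j ≤ ρ) :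
    Real.log (s ^ p / M p) + (p - 1) * Real.log ρ ≤
      Real.log ((ρ ^ 2 * s) ^ p / (M p * ∏ j ∈ Finset.range (p + 1), r j)) := by
  have hρ : 0 < ρ := (hr 0).trans_le (hrρ 0 (Nat.zero_le p))
  have hsum : ∑ j ∈ Finset.range (p + 1), Real.log (r j) ≤ (p + 1) * Real.log ρ := by
    have := Finset.sum_le_card_nsmul (Finset.range (p + 1)) (fun j => Real.log (r j))
      (Real.log ρ) fun j hj => Real.log_le_log (hr j) (hrρ j (Finset.mem_range_succ_iff.1 hj))
    simpa using this
  have hMp := hpos p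
  have hprod : 0 < ∏ j ∈ Finset.range (p + 1), r j := Finset.prod_pos fun j _ => hr j
  rw [Real.log_div (by positivity) hMp.ne', Real.log_div (by positivity) (by positivity),
    Real.log_mul hMp.ne' hprod.ne',
    Real.log_prod fun j _ => (hr j).ne', Real.log_pow, Real.log_pow,
    Real.log_mul (by positivity) hs.ne', Real.log_pow]
  push_cast
  linarith

theorem log_add_Massoc_le_Massoc_weighted (hmono : Monotone (succRatio M))
    (hunb : ∀ x, ∃ q, x < succRatio M q) {r : ℕ → ℝ} (hr : ∀ j, 1 ≤ r j) {ρ s C : ℝ} {Q : ℕ}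
    (hρ : 2 ≤ ρ) (hC : Real.log C ≤ Q * Real.log 2) (hQ : succRatio M Q ≤ s)
    (hrρ : ∀ j ≤ peakIndex M s, r j ≤ ρ) :
    Real.log C + Massoc M s ≤
      Massoc (fun p => M p * ∏ j ∈ Finset.range (p + 1), r j) (ρ ^ 2 * s) := by
  have hs0 : 0 < s := (succRatio_pos hpos Q).trans_le hQ
  set p := peakIndex M s
  have hQp : (Q : ℝ) ≤ p - 1 := by
    have := lt_peakIndex hmono (hunb s) hQ
    rw [le_sub_iff_add_le]
    exact_mod_cast this
  have hCp : Real.log C ≤ (p - 1) * Real.log ρ := hC.trans <|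
    mul_le_mul hQp (Real.log_le_log two_pos hρ) (Real.log_nonneg one_le_two)
      ((Nat.cast_nonneg Q).trans hQp)
  calc Real.log C + Massoc M s ≤ Real.log (s ^ p / M p) + (p - 1) * Real.log ρ := by
        linarith [Massoc_le_log_peakIndex hpos hmono (hunb s) hs0]
    _ ≤ Real.log ((ρ ^ 2 * s) ^ p / (M p * ∏ j ∈ Finset.range (p + 1), r j)) :=
        log_pow_div_add_le_log_weighted hpos (fun j => one_pos.trans_le (hr j)) hs0 hrρ
    _ ≤ _ := log_pow_div_le_Massoc_weighted hpos hmono hr (hunb _) (by positivity) p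

end Weighted

theorem exists_le_exp_Massoc_of_bddAbove_succRatio {M : ℕ → ℝ} (hpos : ∀ p, 0 < M p)
    (hB : BddAbove (range (succRatio M))) {g : ℝ → ℝ}
    (hO : ∃ C > (0 : ℝ), ∃ R : ℝ, ∀ t, R ≤ t → g t ≤ C * Real.exp (Massoc M t))
    (L : ℕ → ℝ) :
    ∃ C > (0 : ℝ), ∃ R : ℝ, ∀ t, R ≤ t → g t ≤ C * Real.exp (Massoc L t) := by
  obtain ⟨b, hb⟩ := hB
  obtain ⟨C, hC, R, hR⟩ := hO
  set c := Real.exp (min 0 (-Real.log (L 0)))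
  refine ⟨C / c, by positivity, max R (2 * b), fun t ht => ?_⟩
  have hMt : Massoc M t = 0 :=
    Massoc_eq_zero_of_succRatio_le hpos (fun q => hb (mem_range_self q)) (le_of_max_le_right ht)
  calc g t ≤ C := by simpa [hMt] using hR t (le_of_max_le_left ht)
    _ = C / c * c := (div_mul_cancel₀ C (Real.exp_pos _).ne').symm
    _ ≤ C / c * Real.exp (Massoc L t) := by
        gcongr
        exact Real.exp_le_exp.2 (min_zero_neg_log_le_Massoc L t)

theorem exists_weight_of_forall_lt_succRatio {M : ℕ → ℝ} (hpos : ∀ p, 0 < M p)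
    (hmono : Monotone (succRatio M)) (hunb : ∀ x, ∃ q, x < succRatio M q) {g : ℝ → ℝ}
    (hO : ∀ k > (0 : ℝ), ∃ C > (0 : ℝ), ∃ R : ℝ, ∀ t, R ≤ t →
      g t ≤ C * Real.exp (Massoc M (k * t))) :
    ∃ r : ℕ → ℝ, (∀ j, 0 < r j) ∧ Monotone r ∧ Tendsto r atTop atTop ∧
      ∃ C > (0 : ℝ), ∃ R : ℝ, ∀ t, R ≤ t →
        g t ≤ C * Real.exp
          (Massoc (fun p => M p * ∏ j ∈ Finset.range (p + 1), r j) t) := by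
  set ρ : ℕ → ℝ := fun n => n + 2
  choose C hC R hR using fun n => hO (ρ n ^ 2)⁻¹ (by positivity)
  choose Q hQ using fun n => exists_nat_ge (Real.log (C n) / Real.log 2)
  set T : ℕ → ℝ := fun n => max (max (R n) (ρ n ^ 2 * succRatio M (Q n))) n
  obtain ⟨r, hr_mono, hr_tendsto, hr_le⟩ :=
    exists_monotone_tendsto_atTop_forall_le fun n => peakIndex M (T (n + 1) / ρ n ^ 2)
  refine ⟨fun j => r j + 2, fun j => by positivity, (Nat.mono_cast.comp hr_mono).add_const 2,
    tendsto_atTop_add_const_right _ _ (tendsto_natCast_atTop_atTop.comp hr_tendsto),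
    1, one_pos, T 0, fun t ht => ?_⟩
  obtain ⟨n, hTn, hTn1⟩ := exists_le_lt_succ (fun x => (exists_nat_gt x).imp
    fun n hn => hn.trans_le (le_max_right _ _)) ht
  set s := t / ρ n ^ 2
  have ht_eq : t = ρ n ^ 2 * s := (mul_div_cancel₀ t (by positivity)).symm
  have hQs : succRatio M (Q n) ≤ s := by
    rw [le_div_iff₀ (by positivity), mul_comm]
    exact (le_max_right _ _).trans ((le_max_left _ _).trans hTn)
  have hrρ : ∀ j ≤ peakIndex M s, (r j : ℝ) + 2 ≤ ρ n := fun j hj => by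
    have := hr_le n j (hj.trans (peakIndex_mono (hunb _)
      (div_le_div_of_nonneg_right hTn1.le (by positivity))))
    show (r j : ℝ) + 2 ≤ n + 2
    exact_mod_cast Nat.add_le_add_right this 2
  have key := log_add_Massoc_le_Massoc_weighted hpos hmono hunb (r := fun j => r j + 2)
    (fun j => by linarith [(r j).cast_nonneg (α := ℝ)]) (by simp [ρ])
    ((div_le_iff₀ (Real.log_pos one_lt_two)).1 (hQ n)) hQs hrρ
  rw [← ht_eq] at key
  calc g t ≤ C n * Real.exp (Massoc M ((ρ n ^ 2)⁻¹ * t)) :=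
        hR n t ((le_max_left _ _).trans ((le_max_left _ _).trans hTn))
    _ = Real.exp (Real.log (C n) + Massoc M s) := by
        rw [Real.exp_add, Real.exp_log (hC n), inv_mul_eq_div]
    _ ≤ 1 * Real.exp (Massoc (fun p => M p * ∏ j ∈ Finset.range (p + 1), ((r j : ℝ) + 2)) t) := by
        rw [one_mul]
        exact Real.exp_le_exp.2 key

theorem growth_comparison_moderate_general (M : ℕ → ℝ) (hpos : ∀ p, 0 < M p)
    (hM1 : ∀ p : ℕ, 1 ≤ p → M p ^ 2 ≤ M (p - 1) * M (p + 1))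
    (g : ℝ → ℝ)
    (hO : ∀ k > (0 : ℝ), ∃ C > (0 : ℝ), ∃ R : ℝ, ∀ t, R ≤ t →
      g t ≤ C * Real.exp (Massoc M (k * t))) :
    ∃ r : ℕ → ℝ, (∀ j, 0 < r j) ∧ Monotone r ∧ Tendsto r atTop atTop ∧
      ∃ C > (0 : ℝ), ∃ R : ℝ, ∀ t, R ≤ t →
        g t ≤ C * Real.exp
          (Massoc (fun p => M p * ∏ j ∈ Finset.range (p + 1), r j) t) := by
  by_cases hB : BddAbove (range (succRatio M))
  · exact ⟨fun j => j + 1, fun j => by positivity, Nat.mono_cast.add_const 1,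
      tendsto_atTop_add_const_right _ _ tendsto_natCast_atTop_atTop,
      exists_le_exp_Massoc_of_bddAbove_succRatio hpos hB (by simpa using hO 1 one_pos) _⟩
  · exact exists_weight_of_forall_lt_succRatio hpos (succRatio_monotone hpos hM1)
      (fun x => by simpa using not_bddAbove_iff.1 hB x) hO

/-- Lemma 4.4(i): if `g : [a,∞) → [0,∞)` satisfies `g(t) = O(e^{M(kt)})` as `t → ∞`
for every `k > 0`, where `M` is the associated function of a weight sequence
satisfying (M.1) and (M.2), then there is a non-decreasing sequence `(r_j)` of
positive reals tending to `∞` with `g(t) = O(e^{M_{r_j}(t)})`, where `M_{r_j}` is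
the associated function of `p ↦ M_p ∏_{j=0}^p r_j`. -/
theorem growth_comparison_moderate (M : ℕ → ℝ) (hpos : ∀ p, 0 < M p) (hM0 : M 0 = 1)
    (hM1 : ∀ p : ℕ, 1 ≤ p → M p ^ 2 ≤ M (p - 1) * M (p + 1))
    (A H : ℝ) (hA : 1 ≤ A) (hH : 1 ≤ H)
    (hM2 : ∀ p q : ℕ, M (p + q) ≤ A * H ^ (p + q) * M p * M q)
    (a : ℝ) (g : ℝ → ℝ) (hg : ∀ t, a ≤ t → 0 ≤ g t)
    (hO : ∀ k > (0 : ℝ), ∃ C > (0 : ℝ), ∃ R : ℝ, ∀ t, R ≤ t →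
      g t ≤ C * Real.exp (Massoc M (k * t))) :
    ∃ r : ℕ → ℝ, (∀ j, 0 < r j) ∧ Monotone r ∧ Tendsto r atTop atTop ∧
      ∃ C > (0 : ℝ), ∃ R : ℝ, ∀ t, R ≤ t →
        g t ≤ C * Real.exp
          (Massoc (fun p => M p * ∏ j ∈ Finset.range (p + 1), r j) t) :=
  growth_comparison_moderate_general M hpos hM1 g hO
end

section
/- Let M(t) be the associated function of a weight sequence M_p satisfying (M.1) and (M.2), and let g : [a,∞) → [0,∞). If g(t) = O(e^{-M_{r_j}(t)}) as t → ∞ for every non-decreasing sequence (r_j) tending to infinity (where M_{r_j} is the associated function of p ↦ M_p ∏_{j=0}^p r_j), then there exists k > 0 such that g(t) = O(e^{-M(kt)}). -/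
open Real Filter

/-!
Suppose no `k` works. Then for every `n` there is `tₙ ≥ n + 1` with
`g(tₙ) > (n + 1)² e^{-M(tₙ/(n+1))}`; let `pₙ` nearly attain the supremum defining `M(tₙ/(n+1))`.
A sequence `r` tending to infinity slowly enough that `r_j ≤ n + 1` for all `j ≤ pₙ` gives
`M_r(tₙ) ≥ M(tₙ/(n+1)) - 1 - log (n + 1)`, so the assumed bound `g = O(e^{-M_r})` yields
`g(tₙ) ≤ C e (n + 1) e^{-M(tₙ/(n+1))}`, which is incompatible with the choice of `tₙ` once
`n + 1 > C e`. Log-convexity of `M` keeps the supremum defining `M_r` finite.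
-/

lemma log_le_Massoc {M : ℕ → ℝ} {t : ℝ} (h : BddAbove (Set.range fun p => log (t ^ p / M p)))
    (p : ℕ) : log (t ^ p / M p) ≤ Massoc M t :=
  le_ciSup h p

lemma bddAbove_range_log_div_pow {L : ℕ → ℝ} (hL : ∀ p, 0 < L p) {t : ℝ} (ht : 0 < t)
    (h : ∀ᶠ p in atTop, t * L p ≤ L (p + 1)) :
    BddAbove (Set.range fun p => log (t ^ p / L p)) := by
  obtain ⟨k, hk⟩ := eventually_atTop.mp h
  have hanti : AntitoneOn (fun p => log (t ^ p / L p)) (Set.Ici k) := by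
    refine antitoneOn_nat_Ici_of_succ_le fun p hp => ?_
    refine log_le_log (div_pos (pow_pos ht _) (hL _)) ?_
    rw [div_le_div_iff₀ (hL _) (hL _), pow_succ, mul_assoc]
    exact mul_le_mul_of_nonneg_left (hk p hp) (pow_nonneg ht.le _)
  refine (isBoundedUnder_of_eventually_le (a := log (t ^ k / L k)) ?_).bddAbove_range
  filter_upwards [eventually_ge_atTop k] with p hp
  exact hanti (Set.mem_Ici.mpr le_rfl) hp hp

lemma one_mul_le_succ_of_logConvex {M : ℕ → ℝ} (hpos : ∀ p, 0 < M p) (hM0 : M 0 = 1)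
    (hM1 : ∀ p : ℕ, 1 ≤ p → M p ^ 2 ≤ M (p - 1) * M (p + 1)) (q : ℕ) :
    M 1 * M q ≤ M (q + 1) := by
  induction q with
  | zero => rw [hM0, mul_one]
  | succ m ih =>
    have hconv := hM1 (m + 1) (by omega)
    rw [Nat.add_sub_cancel] at hconv
    refine le_of_mul_le_mul_left ?_ (hpos m)
    nlinarith [hpos m, hpos (m + 1), hpos (m + 2), hpos 1]

def prodWeight (M r : ℕ → ℝ) (p : ℕ) : ℝ :=
  M p * ∏ j ∈ Finset.range (p + 1), r j

section prodWeight

variable {M r : ℕ → ℝ}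

lemma prodWeight_pos (hpos : ∀ p, 0 < M p) (hr : ∀ j, 0 < r j) (p : ℕ) :
    0 < prodWeight M r p :=
  mul_pos (hpos p) (Finset.prod_pos fun j _ => hr j)

lemma bddAbove_range_log_div_prodWeight (hpos : ∀ p, 0 < M p) (hM0 : M 0 = 1)
    (hM1 : ∀ p : ℕ, 1 ≤ p → M p ^ 2 ≤ M (p - 1) * M (p + 1))
    (hr : ∀ j, 0 < r j) (hr_top : Tendsto r atTop atTop) {t : ℝ} (ht : 0 < t) :
    BddAbove (Set.range fun p => log (t ^ p / prodWeight M r p)) := by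
  refine bddAbove_range_log_div_pow (prodWeight_pos hpos hr) ht ?_
  filter_upwards [(hr_top.comp (tendsto_add_atTop_nat 1)).eventually_ge_atTop (t / M 1)]
    with p hp
  rw [Function.comp_apply, div_le_iff₀ (hpos 1)] at hp
  have hP : 0 ≤ ∏ j ∈ Finset.range (p + 1), r j := Finset.prod_nonneg fun j _ => (hr j).le
  calc t * prodWeight M r p
      ≤ (r (p + 1) * M 1) * M p * ∏ j ∈ Finset.range (p + 1), r j := by
        rw [prodWeight, ← mul_assoc]
        gcongr
        exact (hpos p).le
    _ = r (p + 1) * (M 1 * M p) * ∏ j ∈ Finset.range (p + 1), r j := by ring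
    _ ≤ r (p + 1) * M (p + 1) * ∏ j ∈ Finset.range (p + 1), r j := by
        gcongr
        · exact (hr _).le
        · exact one_mul_le_succ_of_logConvex hpos hM0 hM1 p
    _ = prodWeight M r (p + 1) := by rw [prodWeight, Finset.prod_range_succ r (p + 1)]; ring

lemma log_div_pow_le_log_div_prodWeight {p : ℕ} (hMp : 0 < M p) (hr : ∀ j, 0 < r j)
    {t N : ℝ} (ht : 0 < t) (hN : 0 < N) (hrN : ∀ j ≤ p, r j ≤ N) :
    log ((N⁻¹ * t) ^ p / M p) ≤ log (t ^ p / prodWeight M r p) + log N := by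
  have hprod : ∏ j ∈ Finset.range (p + 1), r j ≤ N ^ (p + 1) := by
    calc ∏ j ∈ Finset.range (p + 1), r j ≤ ∏ _j ∈ Finset.range (p + 1), N :=
          Finset.prod_le_prod (fun j _ => (hr j).le)
            fun j hj => hrN j (Nat.lt_succ_iff.mp (Finset.mem_range.mp hj))
      _ = N ^ (p + 1) := by rw [Finset.prod_const, Finset.card_range]
  have hP : 0 < ∏ j ∈ Finset.range (p + 1), r j := Finset.prod_pos fun j _ => hr j
  calc log ((N⁻¹ * t) ^ p / M p) = log (t ^ p / (M p * N ^ (p + 1)) * N) := by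
        congr 1
        rw [mul_pow, inv_pow, pow_succ]
        field_simp
    _ ≤ log (t ^ p / prodWeight M r p * N) := by
        refine log_le_log (by positivity) ?_
        rw [prodWeight]
        gcongr
    _ = log (t ^ p / prodWeight M r p) + log N :=
        log_mul (div_pos (pow_pos ht _) (mul_pos hMp hP)).ne' hN.ne'

lemma exp_neg_Massoc_prodWeight_le (hpos : ∀ p, 0 < M p) (hM0 : M 0 = 1)
    (hM1 : ∀ p : ℕ, 1 ≤ p → M p ^ 2 ≤ M (p - 1) * M (p + 1))
    (hr : ∀ j, 0 < r j) (hr_top : Tendsto r atTop atTop) {t N : ℝ} (ht : 0 < t) (hN : 0 < N)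
    {p : ℕ} (hrN : ∀ j ≤ p, r j ≤ N)
    (hp : Massoc M (N⁻¹ * t) - 1 < log ((N⁻¹ * t) ^ p / M p)) :
    exp (-Massoc (prodWeight M r) t) ≤ exp 1 * N * exp (-Massoc M (N⁻¹ * t)) := by
  have hle := log_le_Massoc (bddAbove_range_log_div_prodWeight hpos hM0 hM1 hr hr_top ht) p
  have hcmp := log_div_pow_le_log_div_prodWeight (hpos p) hr ht hN hrN
  calc exp (-Massoc (prodWeight M r) t) ≤ exp (1 + log N + -Massoc M (N⁻¹ * t)) :=
        exp_le_exp.mpr (by linarith)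
    _ = exp 1 * N * exp (-Massoc M (N⁻¹ * t)) := by rw [exp_add, exp_add, exp_log hN]

end prodWeight

def slowIndex (p : ℕ → ℕ) (j : ℕ) : ℕ :=
  Nat.find (⟨j, Or.inr le_rfl⟩ : ∃ n, j ≤ p n ∨ j ≤ n)

lemma slowIndex_le {p : ℕ → ℕ} {j n : ℕ} (h : j ≤ p n) : slowIndex p j ≤ n :=
  Nat.find_min' _ (Or.inl h)

lemma slowIndex_mono (p : ℕ → ℕ) : Monotone (slowIndex p) := fun _ _ hij =>
  Nat.find_mono fun _ hn => hn.imp hij.trans hij.trans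

lemma tendsto_slowIndex (p : ℕ → ℕ) : Tendsto (slowIndex p) atTop atTop := by
  refine tendsto_atTop_atTop_of_monotone (slowIndex_mono p) fun b =>
    ⟨(Finset.range b).sup (fun m => max (p m) m) + 1, ?_⟩
  rw [slowIndex, Nat.le_find_iff]
  intro m hm hcond
  have := Finset.le_sup (f := fun m => max (p m) m) (Finset.mem_range.mpr hm)
  omega

theorem growth_comparison_negligible_general (M : ℕ → ℝ) (hpos : ∀ p, 0 < M p) (hM0 : M 0 = 1)
    (hM1 : ∀ p : ℕ, 1 ≤ p → M p ^ 2 ≤ M (p - 1) * M (p + 1))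
    (g : ℝ → ℝ)
    (hO : ∀ r : ℕ → ℝ, (∀ j, 0 < r j) → Monotone r → Tendsto r atTop atTop →
      ∃ C > (0 : ℝ), ∃ R : ℝ, ∀ t, R ≤ t →
        g t ≤ C * Real.exp
          (-(Massoc (fun p => M p * ∏ j ∈ Finset.range (p + 1), r j) t))) :
    ∃ k > (0 : ℝ), ∃ C > (0 : ℝ), ∃ R : ℝ, ∀ t, R ≤ t →
      g t ≤ C * Real.exp (-(Massoc M (k * t))) := by
  by_contra hcon
  push Not at hcon
  choose t ht hgt using fun n : ℕ =>
    hcon ((n : ℝ) + 1)⁻¹ (by positivity) (((n : ℝ) + 1) ^ 2) (by positivity) ((n : ℝ) + 1)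
  choose p hp using fun n : ℕ =>
    exists_lt_of_lt_ciSup (sub_one_lt (Massoc M (((n : ℝ) + 1)⁻¹ * t n)))
  set r : ℕ → ℝ := fun j => (slowIndex p j : ℝ) + 1
  have hr : ∀ j, 0 < r j := fun j => by positivity
  have hr_top : Tendsto r atTop atTop :=
    tendsto_atTop_add_const_right _ 1 (tendsto_natCast_atTop_atTop.comp (tendsto_slowIndex p))
  obtain ⟨C, hC, R, hR⟩ :=
    hO r hr (fun i j hij => by simpa [r] using slowIndex_mono p hij) hr_top
  obtain ⟨n, hn⟩ := exists_nat_ge (max R (C * exp 1))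
  have hN : (0 : ℝ) < n + 1 := by positivity
  have hRt : R ≤ t n := by linarith [ht n, le_max_left R (C * exp 1)]
  have hcmp := exp_neg_Massoc_prodWeight_le hpos hM0 hM1 hr hr_top (hN.trans_le (ht n)) hN
    (fun j hj => by simpa [r] using slowIndex_le hj) (hp n)
  have hlt := (hgt n).trans_le ((hR (t n) hRt).trans (mul_le_mul_of_nonneg_left hcmp hC.le))
  nlinarith [le_max_right R (C * exp 1), mul_pos hN (exp_pos (-Massoc M (((n : ℝ) + 1)⁻¹ * t n)))]

/-- Lemma 4.4(ii): if `g : [a,∞) → [0,∞)` satisfies `g(t) = O(e^{-M_{r_j}(t)})` as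
`t → ∞` for every non-decreasing sequence `(r_j)` of positive reals tending to `∞`
(where `M_{r_j}` is the associated function of `p ↦ M_p ∏_{j=0}^p r_j`), then there
exists `k > 0` with `g(t) = O(e^{-M(kt)})`. -/
theorem growth_comparison_negligible (M : ℕ → ℝ) (hpos : ∀ p, 0 < M p) (hM0 : M 0 = 1)
    (hM1 : ∀ p : ℕ, 1 ≤ p → M p ^ 2 ≤ M (p - 1) * M (p + 1))
    (A H : ℝ) (hA : 1 ≤ A) (hH : 1 ≤ H)
    (hM2 : ∀ p q : ℕ, M (p + q) ≤ A * H ^ (p + q) * M p * M q)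
    (a : ℝ) (g : ℝ → ℝ) (hg : ∀ t, a ≤ t → 0 ≤ g t)
    (hO : ∀ r : ℕ → ℝ, (∀ j, 0 < r j) → Monotone r → Tendsto r atTop atTop →
      ∃ C > (0 : ℝ), ∃ R : ℝ, ∀ t, R ≤ t →
        g t ≤ C * Real.exp
          (-(Massoc (fun p => M p * ∏ j ∈ Finset.range (p + 1), r j) t))) :
    ∃ k > (0 : ℝ), ∃ C > (0 : ℝ), ∃ R : ℝ, ∀ t, R ≤ t →
      g t ≤ C * Real.exp (-(Massoc M (k * t))) :=
  growth_comparison_negligible_general M hpos hM0 hM1 g hO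
end

section
/- Let M_p be a weight sequence satisfying (M.1) and suppose g : [a,∞) → [0,∞) satisfies: for every k > 0 there is R > 0 with g(t) ≤ A e^{M(kt)} for all t ≥ R (A a fixed constant). Then there exists a subordinate function ρ : [0,∞) → [0,∞) (continuous, increasing, ρ(0) = 0, ρ(t) = o(t)) and constants C, t_0 such that g(t) ≤ C e^{M(ρ(t))} for all t ≥ t_0. -/
/-!
Pick thresholds `0 = s₀ ≤ s₁ ≤ ⋯ → ∞` such that `g t ≤ A e^{M(t/(n+2))}` for `t ≥ s_{n+1}`.
The infimum `ρ t = ⨅ m, (t/(m+1) + s_m)` of increasing affine functions is concave, hence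
continuous, it satisfies `ρ t ≤ t/(m+1) + s_m`, hence `ρ t = o(t)`, and `ρ t ≥ t/(n+2)` for
`t ≤ s_{n+2}` (the terms with `m ≤ n+1` by their slope, the others since `s_m ≥ t`). On
`[s_{n+1}, s_{n+2}]` the monotonicity of `M` then turns the hypothesis into the bound.
-/

open Real Filter Set

open Topology

structure IsSubordinate (ρ : ℝ → ℝ) : Prop where
  continuousOn : ContinuousOn ρ (Ici 0)
  monotoneOn : MonotoneOn ρ (Ici 0)
  map_zero : ρ 0 = 0
  nonneg : ∀ t, 0 ≤ t → 0 ≤ ρ t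
  tendsto_div : Tendsto (fun t => ρ t / t) atTop (𝓝 0)

section Massoc

variable {M : ℕ → ℝ} (hpos : ∀ p, 0 < M p) {x y : ℝ}
include hpos

lemma log_pow_div_le_log_pow_div (hx : 0 < x) (hxy : x ≤ y) (p : ℕ) :
    log (x ^ p / M p) ≤ log (y ^ p / M p) :=
  have := hpos p
  log_le_log (by positivity) (by gcongr)

lemma Massoc_mono (hB : BddAbove (range fun p => log (y ^ p / M p))) (hx : 0 < x)
    (hxy : x ≤ y) : Massoc M x ≤ Massoc M y :=
  ciSup_mono hB (log_pow_div_le_log_pow_div hpos hx hxy)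

lemma Massoc_eq_zero_of_not_bddAbove (hx : 0 < x) (hxy : x ≤ y)
    (hB : ¬BddAbove (range fun p => log (x ^ p / M p))) : Massoc M y = 0 := by
  refine Real.iSup_of_not_bddAbove fun ⟨b, hb⟩ => hB ⟨b, ?_⟩
  rintro _ ⟨p, rfl⟩
  exact (log_pow_div_le_log_pow_div hpos hx hxy p).trans (hb ⟨p, rfl⟩)

end Massoc

noncomputable def infAffine (b : ℕ → ℝ) (t : ℝ) : ℝ :=
  ⨅ m : ℕ, (t / (m + 1) + b m)

section InfAffine

variable {b : ℕ → ℝ} {t : ℝ}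

lemma infAffine_le (hb : 0 ≤ b) (ht : 0 ≤ t) (m : ℕ) : infAffine b t ≤ t / (m + 1) + b m :=
  ciInf_le ⟨0, by rintro _ ⟨k, rfl⟩; have : 0 ≤ b k := hb k; positivity⟩ m

lemma infAffine_nonneg (hb : 0 ≤ b) (ht : 0 ≤ t) : 0 ≤ infAffine b t :=
  le_ciInf fun m => by have : 0 ≤ b m := hb m; positivity

lemma infAffine_le_self (hb : 0 ≤ b) (hb0 : b 0 = 0) (ht : 0 ≤ t) : infAffine b t ≤ t := by
  simpa [hb0] using infAffine_le hb ht 0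

lemma infAffine_zero (hb : 0 ≤ b) (hb0 : b 0 = 0) : infAffine b 0 = 0 :=
  le_antisymm (infAffine_le_self hb hb0 le_rfl) (infAffine_nonneg hb le_rfl)

lemma monotoneOn_infAffine (hb : 0 ≤ b) : MonotoneOn (infAffine b) (Ici 0) :=
  fun _ hx _ _ hxy => le_ciInf fun m => (infAffine_le hb hx m).trans (by gcongr)

lemma concaveOn_infAffine (hb : 0 ≤ b) : ConcaveOn ℝ (Ici 0) (infAffine b) := by
  refine ⟨convex_Ici 0, fun x hx y hy p q hp hq hpq => le_ciInf fun m => ?_⟩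
  simp only [smul_eq_mul]
  calc p * infAffine b x + q * infAffine b y
      ≤ p * (x / (m + 1) + b m) + q * (y / (m + 1) + b m) := by
        gcongr
        · exact infAffine_le hb hx m
        · exact infAffine_le hb hy m
    _ = (p * x + q * y) / (m + 1) + b m := by linear_combination b m * hpq

lemma continuousOn_infAffine (hb : 0 ≤ b) (hb0 : b 0 = 0) :
    ContinuousOn (infAffine b) (Ici 0) := by
  intro x hx
  rcases (mem_Ici.mp hx).eq_or_lt with rfl | hx
  · rw [ContinuousWithinAt, infAffine_zero hb hb0]
    exact squeeze_zero' (eventually_nhdsWithin_of_forall fun t ht => infAffine_nonneg hb ht)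
      (eventually_nhdsWithin_of_forall fun t ht => infAffine_le_self hb hb0 ht)
      (tendsto_id.mono_left nhdsWithin_le_nhds)
  · have hint := (concaveOn_infAffine hb).continuousOn_interior
    rw [interior_Ici] at hint
    exact (hint.continuousAt (Ioi_mem_nhds hx)).continuousWithinAt

lemma tendsto_infAffine_div (hb : 0 ≤ b) :
    Tendsto (fun t => infAffine b t / t) atTop (𝓝 0) := by
  refine tendsto_order.2 ⟨fun a ha => ?_, fun a ha => ?_⟩
  · filter_upwards [eventually_ge_atTop 0] with t ht
    exact ha.trans_le (div_nonneg (infAffine_nonneg hb ht) ht)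
  · obtain ⟨m, hm⟩ := exists_nat_one_div_lt ha
    have hdecay : Tendsto (fun t => b m / t) atTop (𝓝 0) :=
      tendsto_const_nhds.div_atTop tendsto_id
    have hlim : Tendsto (fun t => 1 / ((m : ℝ) + 1) + b m / t) atTop (𝓝 (1 / ((m : ℝ) + 1))) := by
      simpa using tendsto_const_nhds.add hdecay
    filter_upwards [hlim.eventually (gt_mem_nhds hm), eventually_gt_atTop 0] with t hlt ht
    calc infAffine b t / t ≤ (t / (m + 1) + b m) / t := by
          gcongr; exact infAffine_le hb ht.le m
      _ = 1 / (m + 1) + b m / t := by field_simp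
      _ < a := hlt

lemma isSubordinate_infAffine (hb : 0 ≤ b) (hb0 : b 0 = 0) : IsSubordinate (infAffine b) where
  continuousOn := continuousOn_infAffine hb hb0
  monotoneOn := monotoneOn_infAffine hb
  map_zero := infAffine_zero hb hb0
  nonneg _ := infAffine_nonneg hb
  tendsto_div := tendsto_infAffine_div hb

lemma div_le_infAffine (hb : Monotone b) (hb0 : 0 ≤ b) (ht : 0 ≤ t) {n : ℕ}
    (htn : t ≤ b (n + 1)) : t / (n + 1) ≤ infAffine b t := by
  refine le_ciInf fun m => ?_
  rcases le_or_gt m n with hmn | hnm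
  · have : t / (n + 1) ≤ t / (m + 1) := by gcongr
    have hbm : 0 ≤ b m := hb0 m
    linarith
  · calc t / (n + 1) ≤ t := div_le_self ht (by linarith [n.cast_nonneg (α := ℝ)])
      _ ≤ b m := htn.trans (hb hnm)
      _ ≤ t / (m + 1) + b m := le_add_of_nonneg_left (by positivity)

end InfAffine

lemma exists_strictMono_tendsto_atTop_ge (R : ℕ → ℝ) : ∃ s : ℕ → ℝ, StrictMono s ∧ s 0 = 0 ∧
    Tendsto s atTop atTop ∧ ∀ n, R n ≤ s (n + 1) := by
  set s : ℕ → ℝ := fun n => ∑ i ∈ Finset.range n, (|R i| + 1)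
  have hstep (n : ℕ) : s (n + 1) = s n + (|R n| + 1) := Finset.sum_range_succ _ _
  refine ⟨s, strictMono_nat_of_lt_succ fun n => ?_, by simp [s], ?_, fun n => ?_⟩
  · rw [hstep]; linarith [abs_nonneg (R n)]
  · refine tendsto_atTop_mono (fun n => ?_) tendsto_natCast_atTop_atTop
    calc (n : ℝ) = ∑ _ ∈ Finset.range n, (1 : ℝ) := by simp
      _ ≤ s n := Finset.sum_le_sum fun i _ => by linarith [abs_nonneg (R i)]
  · have : 0 ≤ s n := Finset.sum_nonneg fun i _ => by positivity
    rw [hstep]; linarith [le_abs_self (R n)]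

lemma exists_le_lt_of_tendsto_atTop {s : ℕ → ℝ} (hs : Tendsto s atTop atTop) {t : ℝ}
    (ht : s 0 ≤ t) : ∃ n, s n ≤ t ∧ t < s (n + 1) := by
  classical
  have hex : ∃ n, t < s n := (hs.eventually_gt_atTop t).exists
  have h0 : Nat.find hex ≠ 0 := fun h => (h ▸ Nat.find_spec hex).not_ge ht
  obtain ⟨n, hn⟩ := Nat.exists_eq_add_one_of_ne_zero h0
  refine ⟨n, not_lt.1 (Nat.find_min hex (hn ▸ n.lt_add_one)), ?_⟩
  rw [← hn]
  exact Nat.find_spec hex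

lemma exists_isSubordinate_inv_mul_le (R : ℕ → ℝ) : ∃ ρ, IsSubordinate ρ ∧
    ∃ t₀ > 0, ∀ t ≥ t₀, ∃ n : ℕ, R n ≤ t ∧ ((n : ℝ) + 2)⁻¹ * t ≤ ρ t := by
  obtain ⟨s, hs, hs0, hs_lim, hRs⟩ := exists_strictMono_tendsto_atTop_ge R
  have hs_nonneg : 0 ≤ s := fun n => by simpa [hs0] using hs.monotone n.zero_le
  refine ⟨infAffine s, isSubordinate_infAffine hs_nonneg hs0, s 1, hs0 ▸ hs zero_lt_one,
    fun t ht => ?_⟩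
  obtain ⟨n, hnt, htn⟩ := exists_le_lt_of_tendsto_atTop
    (hs_lim.comp (tendsto_add_atTop_nat 1)) ht
  refine ⟨n, (hRs n).trans hnt, ?_⟩
  have := div_le_infAffine hs.monotone hs_nonneg ((hs_nonneg _).trans hnt) htn.le
  convert this using 1
  push_cast
  ring

theorem exists_subordinate_bound_general (M : ℕ → ℝ) (hpos : ∀ p, 0 < M p)
    (A : ℝ) (hA : 0 < A) (g : ℝ → ℝ)
    (hO : ∀ k > (0 : ℝ), ∃ R : ℝ, ∀ t, R ≤ t → g t ≤ A * Real.exp (Massoc M (k * t))) :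
    ∃ ρ : ℝ → ℝ,
      ContinuousOn ρ (Ici 0) ∧ MonotoneOn ρ (Ici 0) ∧ ρ 0 = 0 ∧
      (∀ t, 0 ≤ t → 0 ≤ ρ t) ∧
      Tendsto (fun t => ρ t / t) atTop (nhds 0) ∧
      ∃ C : ℝ, ∃ t₀ : ℝ, ∀ t, t₀ ≤ t → g t ≤ C * Real.exp (Massoc M (ρ t)) := by
  by_cases hB : ∀ x : ℝ, 0 < x → BddAbove (range fun p => log (x ^ p / M p))
  · choose R hR using fun n : ℕ => hO ((n : ℝ) + 2)⁻¹ (by positivity)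
    obtain ⟨ρ, hρ, t₀, ht₀, hρR⟩ := exists_isSubordinate_inv_mul_le R
    refine ⟨ρ, hρ.continuousOn, hρ.monotoneOn, hρ.map_zero, hρ.nonneg, hρ.tendsto_div,
      A, t₀, fun t ht => ?_⟩
    obtain ⟨n, hRn, hρt⟩ := hρR t ht
    have hk : 0 < ((n : ℝ) + 2)⁻¹ * t := by have := ht₀.trans_le ht; positivity
    calc g t ≤ A * exp (Massoc M (((n : ℝ) + 2)⁻¹ * t)) := hR n t hRn
      _ ≤ A * exp (Massoc M (ρ t)) := by
        gcongr
        exact Massoc_mono hpos (hB _ (hk.trans_le hρt)) hk hρt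
  -- Past a point where the supremum defining `M` is infinite, `Massoc` is the junk value `0`.
  · push Not at hB
    obtain ⟨x, hx, hx_unbdd⟩ := hB
    obtain ⟨R, hR⟩ := hO 1 one_pos
    refine ⟨fun _ => 0, continuousOn_const, monotoneOn_const, rfl, fun _ _ => le_rfl,
      tendsto_const_nhds.congr fun t => (zero_div t).symm, A / exp (Massoc M 0), max R x,
      fun t ht => ?_⟩
    have hgt := hR t (le_of_max_le_left ht)
    rw [one_mul, Massoc_eq_zero_of_not_bddAbove hpos hx (le_of_max_le_right ht) hx_unbdd,
      exp_zero, mul_one] at hgt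
    rwa [div_mul_cancel₀ _ (exp_pos _).ne']

/-- If `g : [a,∞) → [0,∞)` satisfies: for every `k > 0` there is `R` with
`g(t) ≤ A e^{M(kt)}` for all `t ≥ R` (`A` a fixed constant), then there exists a
subordinate function `ρ : [0,∞) → [0,∞)` (continuous, increasing, `ρ(0) = 0`,
`ρ(t) = o(t)`) and constants `C, t₀` such that `g(t) ≤ C e^{M(ρ(t))}` for `t ≥ t₀`. -/
theorem exists_subordinate_bound (M : ℕ → ℝ) (hpos : ∀ p, 0 < M p) (hM0 : M 0 = 1)
    (hM1 : ∀ p : ℕ, 1 ≤ p → M p ^ 2 ≤ M (p - 1) * M (p + 1))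
    (a A : ℝ) (hA : 0 < A) (g : ℝ → ℝ) (hg : ∀ t, a ≤ t → 0 ≤ g t)
    (hO : ∀ k > (0 : ℝ), ∃ R : ℝ, ∀ t, R ≤ t → g t ≤ A * Real.exp (Massoc M (k * t))) :
    ∃ ρ : ℝ → ℝ,
      ContinuousOn ρ (Ici 0) ∧ MonotoneOn ρ (Ici 0) ∧ ρ 0 = 0 ∧
      (∀ t, 0 ≤ t → 0 ≤ ρ t) ∧
      Tendsto (fun t => ρ t / t) atTop (nhds 0) ∧
      ∃ C : ℝ, ∃ t₀ : ℝ, ∀ t, t₀ ≤ t → g t ≤ C * Real.exp (Massoc M (ρ t)) :=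
  exists_subordinate_bound_general M hpos A hA g hO
end

section
/- Let M_p satisfy (M.1) and (M.3)': Σ_{p≥1} M_{p-1}/M_p < ∞. Set M'_p = min_{0 ≤ q ≤ p} M_q M_{p-q}. Then the associated function of M'_p equals 2M, where M is the associated function of M_p, and M'_p satisfies (M.1) and (M.3)'. -/
/-!
For a log-convex sequence the products `M q * M (p - q)` decrease as `q` moves towards `p / 2`,
so `M'_p = M_{⌊p/2⌋} M_{⌈p/2⌉}`. From this closed form, (M.1) for `M'` is again the monotonicity
of the ratios `M_{q+1} / M_q`, and `M'_p / M'_{p+1} = M_{⌊p/2⌋} / M_{⌊p/2⌋+1}`, so the series of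
(M.3)' for `M'` is that of `M` with every term taken twice. For the associated functions, with
`a_q = log (t^q / M_q)` one has `a_q + a_r ≤ log (t^{q+r} / M'_{q+r})` by minimality, with
equality at `q = ⌊p/2⌋, r = ⌈p/2⌉`; taking suprema gives `2M`.
-/

open Real

/-- `M'_p = min_{0 ≤ q ≤ p} M_q M_{p-q}`. -/
noncomputable def Mprime (M : ℕ → ℝ) (p : ℕ) : ℝ :=
  (Finset.range (p + 1)).inf' Finset.nonempty_range_add_one (fun q => M q * M (p - q))

open Set Filter Topology

section LogConvex

variable {M : ℕ → ℝ}

lemma logConvex_mul_succ_le (hpos : ∀ p, 0 < M p)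
    (hM1 : ∀ p : ℕ, 1 ≤ p → M p ^ 2 ≤ M (p - 1) * M (p + 1)) {q r : ℕ} (hqr : q ≤ r) :
    M (q + 1) * M r ≤ M q * M (r + 1) := by
  induction r, hqr using Nat.le_induction with
  | base => rw [mul_comm]
  | succ r _ ih =>
    have hconv : M (r + 1) * M (r + 1) ≤ M r * M (r + 2) := by
      simpa [sq] using hM1 (r + 1) (by omega)
    refine le_of_mul_le_mul_right ?_ (hpos r)
    calc M (q + 1) * M (r + 1) * M r = M (q + 1) * M r * M (r + 1) := by ring
      _ ≤ M q * M (r + 1) * M (r + 1) := by gcongr; exact (hpos _).le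
      _ = M q * (M (r + 1) * M (r + 1)) := by ring
      _ ≤ M q * (M r * M (r + 2)) := by gcongr; exact (hpos _).le
      _ = M q * M (r + 1 + 1) * M r := by ring

lemma logConvex_mul_add_le (hpos : ∀ p, 0 < M p)
    (hM1 : ∀ p : ℕ, 1 ≤ p → M p ^ 2 ≤ M (p - 1) * M (p + 1)) {i k : ℕ} (hik : i ≤ k) (n : ℕ) :
    M (i + n) * M k ≤ M i * M (k + n) := by
  induction n with
  | zero => rfl
  | succ n ih =>
    have hstep := logConvex_mul_succ_le hpos hM1 (show i + n ≤ k + n by omega)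
    refine le_of_mul_le_mul_right ?_ (hpos (k + n))
    calc M (i + (n + 1)) * M k * M (k + n) = M (i + n + 1) * M (k + n) * M k := by ring_nf
      _ ≤ M (i + n) * M (k + n + 1) * M k := by gcongr; exact (hpos _).le
      _ = M (i + n) * M k * M (k + n + 1) := by ring
      _ ≤ M i * M (k + n) * M (k + n + 1) := by gcongr; exact (hpos _).le
      _ = M i * M (k + (n + 1)) * M (k + n) := by ring_nf

end LogConvex

section Mprime

variable {M : ℕ → ℝ}

lemma Mprime_pos (hpos : ∀ p, 0 < M p) (p : ℕ) : 0 < Mprime M p :=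
  (Finset.lt_inf'_iff _).2 fun q _ => mul_pos (hpos q) (hpos (p - q))

lemma Mprime_le_mul (q r : ℕ) : Mprime M (q + r) ≤ M q * M r := by
  have h := Finset.inf'_le (fun i => M i * M (q + r - i))
    (Finset.mem_range.2 (by omega : q < q + r + 1))
  rwa [Nat.add_sub_cancel_left] at h

lemma Mprime_eq_mul_half (hpos : ∀ p, 0 < M p)
    (hM1 : ∀ p : ℕ, 1 ≤ p → M p ^ 2 ≤ M (p - 1) * M (p + 1)) (p : ℕ) :
    Mprime M p = M (p / 2) * M ((p + 1) / 2) := by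
  have hhalf : ∀ q, q ≤ p / 2 → M (p / 2) * M ((p + 1) / 2) ≤ M q * M (p - q) := fun q hq => by
    simpa [Nat.add_sub_cancel' hq, show (p + 1) / 2 + (p / 2 - q) = p - q by omega] using
      logConvex_mul_add_le hpos hM1 (show q ≤ (p + 1) / 2 by omega) (p / 2 - q)
  apply le_antisymm
  · have h := Mprime_le_mul (M := M) (p / 2) ((p + 1) / 2)
    rwa [show p / 2 + (p + 1) / 2 = p by omega] at h
  · refine Finset.le_inf' _ _ fun q hq => ?_
    have hqp : q ≤ p := Nat.lt_succ_iff.1 (Finset.mem_range.1 hq)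
    rcases le_or_gt q (p / 2) with hq2 | hq2
    · exact hhalf q hq2
    · simpa [Nat.sub_sub_self hqp, mul_comm] using hhalf (p - q) (by omega)

lemma Mprime_sq_le (hpos : ∀ p, 0 < M p)
    (hM1 : ∀ p : ℕ, 1 ≤ p → M p ^ 2 ≤ M (p - 1) * M (p + 1)) (p : ℕ) (hp : 1 ≤ p) :
    Mprime M p ^ 2 ≤ Mprime M (p - 1) * Mprime M (p + 1) := by
  obtain ⟨n, rfl⟩ := Nat.exists_eq_add_of_le' hp
  have hratio := logConvex_mul_succ_le hpos hM1 (show n / 2 ≤ (n + 1) / 2 by omega)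
  simp only [Mprime_eq_mul_half hpos hM1, Nat.add_sub_cancel,
    show (n + 1 + 1) / 2 = n / 2 + 1 by omega, show (n + 1 + 1 + 1) / 2 = (n + 1) / 2 + 1 by omega]
  have := (mul_pos (hpos ((n + 1) / 2)) (hpos (n / 2 + 1))).le
  nlinarith

lemma Mprime_div_Mprime_succ (hpos : ∀ p, 0 < M p)
    (hM1 : ∀ p : ℕ, 1 ≤ p → M p ^ 2 ≤ M (p - 1) * M (p + 1)) (p : ℕ) :
    Mprime M p / Mprime M (p + 1) = M (p / 2) / M (p / 2 + 1) := by
  rw [Mprime_eq_mul_half hpos hM1, Mprime_eq_mul_half hpos hM1,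
    show (p + 1 + 1) / 2 = p / 2 + 1 by omega, mul_comm (M ((p + 1) / 2)),
    mul_div_mul_right _ _ (hpos _).ne']

lemma summable_Mprime_div_Mprime_succ (hpos : ∀ p, 0 < M p)
    (hM1 : ∀ p : ℕ, 1 ≤ p → M p ^ 2 ≤ M (p - 1) * M (p + 1))
    (hM3' : Summable fun p : ℕ => M p / M (p + 1)) :
    Summable fun p : ℕ => Mprime M p / Mprime M (p + 1) := by
  simp only [Mprime_div_Mprime_succ hpos hM1]
  apply Summable.even_add_odd <;> simpa [Nat.mul_add_div] using hM3'

end Mprime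

lemma Massoc_zero {N : ℕ → ℝ} (hN : N 0 = 1) : Massoc N 0 = 0 := by
  have : (fun p : ℕ => log ((0 : ℝ) ^ p / N p)) = fun _ => 0 := by
    funext p
    cases p <;> simp [hN]
  rw [Massoc, this, ciSup_const]

lemma bddAbove_range_log_pow_div {M : ℕ → ℝ} (hpos : ∀ p, 0 < M p)
    (hlim : Tendsto (fun p => M p / M (p + 1)) atTop (𝓝 0)) {t : ℝ} (ht : 0 < t) :
    BddAbove (range fun p => log (t ^ p / M p)) := by
  have hratio : Tendsto (fun p => ‖t ^ (p + 1) / M (p + 1)‖ / ‖t ^ p / M p‖) atTop (𝓝 0) := by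
    have : (fun p => ‖t ^ (p + 1) / M (p + 1)‖ / ‖t ^ p / M p‖) = fun p => t * (M p / M (p + 1)) := by
      funext p
      have := hpos p
      have := hpos (p + 1)
      rw [Real.norm_of_nonneg (by positivity), Real.norm_of_nonneg (by positivity)]
      field_simp
      ring
    rw [this]
    simpa using hlim.const_mul t
  have hsum := summable_of_ratio_test_tendsto_lt_one zero_lt_one
    (Eventually.of_forall fun p => (div_pos (pow_pos ht p) (hpos p)).ne') hratio
  obtain ⟨C, hC⟩ := hsum.tendsto_atTop_zero.bddAbove_range
  exact ⟨C, forall_mem_range.2 fun p =>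
    (log_le_self (div_pos (pow_pos ht p) (hpos p)).le).trans (hC (mem_range_self p))⟩

lemma ciSup_eq_two_mul_ciSup {ι : Type*} [Nonempty ι] [Add ι] {a b : ι → ℝ}
    (ha : BddAbove (range a)) (hb : ∀ p, ∃ q r, b p ≤ a q + a r)
    (hab : ∀ q r, a q + a r ≤ b (q + r)) :
    ⨆ p, b p = 2 * ⨆ p, a p := by
  have hb_le : ∀ p, b p ≤ 2 * ⨆ p, a p := fun p => by
    obtain ⟨q, r, h⟩ := hb p
    linarith [le_ciSup ha q, le_ciSup ha r]
  refine le_antisymm (ciSup_le hb_le) ?_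
  rw [two_mul]
  exact ciSup_add_ciSup_le fun q r => (hab q r).trans (le_ciSup ⟨_, forall_mem_range.2 hb_le⟩ _)

lemma log_pow_div_add_log_pow_div {t : ℝ} (ht : 0 < t) {x y : ℝ} (hx : 0 < x) (hy : 0 < y)
    (q r : ℕ) : log (t ^ q / x) + log (t ^ r / y) = log (t ^ (q + r) / (x * y)) := by
  rw [← log_mul (by positivity) (by positivity), div_mul_div_comm, pow_add]

lemma Massoc_Mprime_of_pos {M : ℕ → ℝ} (hpos : ∀ p, 0 < M p)
    (hM1 : ∀ p : ℕ, 1 ≤ p → M p ^ 2 ≤ M (p - 1) * M (p + 1)) {t : ℝ} (ht : 0 < t)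
    (hbdd : BddAbove (range fun p => log (t ^ p / M p))) :
    Massoc (Mprime M) t = 2 * Massoc M t := by
  refine ciSup_eq_two_mul_ciSup hbdd (fun p => ⟨p / 2, (p + 1) / 2, ?_⟩) fun q r => ?_
  · rw [log_pow_div_add_log_pow_div ht (hpos _) (hpos _), Mprime_eq_mul_half hpos hM1,
      show p / 2 + (p + 1) / 2 = p by omega]
  · rw [log_pow_div_add_log_pow_div ht (hpos _) (hpos _)]
    have := mul_pos (hpos q) (hpos r)
    exact log_le_log (by positivity) <|
      div_le_div_of_nonneg_left (by positivity) (Mprime_pos hpos _) (Mprime_le_mul q r)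

/-- Roumieu's lemma: if `M_p` satisfies (M.1) and (M.3)', then
`M'_p = min_{q ≤ p} M_q M_{p-q}` has associated function `2M`, and `M'_p`
again satisfies (M.1) and (M.3)'. -/
theorem Mprime_assoc_and_conditions (M : ℕ → ℝ) (hpos : ∀ p, 0 < M p) (hM0 : M 0 = 1)
    (hM1 : ∀ p : ℕ, 1 ≤ p → M p ^ 2 ≤ M (p - 1) * M (p + 1))
    (hM3' : Summable (fun p : ℕ => M p / M (p + 1))) :
    (∀ t : ℝ, 0 ≤ t → Massoc (Mprime M) t = 2 * Massoc M t) ∧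
    (∀ p : ℕ, 1 ≤ p → Mprime M p ^ 2 ≤ Mprime M (p - 1) * Mprime M (p + 1)) ∧
    Summable (fun p : ℕ => Mprime M p / Mprime M (p + 1)) := by
  refine ⟨fun t ht => ?_, Mprime_sq_le hpos hM1, summable_Mprime_div_Mprime_succ hpos hM1 hM3'⟩
  rcases ht.eq_or_lt with rfl | ht
  · have hM'0 : Mprime M 0 = 1 := by simp [Mprime_eq_mul_half hpos hM1, hM0]
    rw [Massoc_zero hM'0, Massoc_zero hM0, mul_zero]
  · exact Massoc_Mprime_of_pos hpos hM1 ht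
      (bddAbove_range_log_pow_div hpos hM3'.tendsto_atTop_zero ht)
end
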